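/- Let i ∈ [1,n] with b = low(i) > 1 and let j ∈ [1,i). If low(b−1) < j < low(b, i−1), then γ^1_{[1,2]}(j,i:i) = γ^0_{[1,2]}(j, b−1) + 1. -/

import Mathlib

/-- `G` is a graph with vertex set `{1,…,n}` (all edges lie inside `{1,…,n}`),
whose adjacency satisfies the interval-graph numbering property: whenever
`i < j < k` and `i` is adjacent to `k`, then `j` is adjacent to `k`. -/
def GoodNumbering (G : SimpleGraph ℕ) (n : ℕ) : Prop :=
  (∀ u v : ℕ, G.Adj u v → u ∈ Finset.Icc 1 n ∧ v ∈ Finset.Icc 1 n) ∧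
  (∀ i j k : ℕ, i < j → j < k → G.Adj i k → G.Adj j k)

/-- `low a = min N[a]`, the minimum of the closed neighborhood of `a`. -/
noncomputable def low (G : SimpleGraph ℕ) (a : ℕ) : ℕ :=
  sInf {b : ℕ | b = a ∨ G.Adj a b}

/-- `lowI a b = min {low k : k ∈ [a,b]}`. -/
noncomputable def lowI (G : SimpleGraph ℕ) (a b : ℕ) : ℕ :=
  sInf (low G '' Set.Icc a b)

/-- `maxlow a = max {low k : low a ≤ k ≤ a}`. -/
noncomputable def maxlow (G : SimpleGraph ℕ) (a : ℕ) : ℕ :=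
  sSup (low G '' Set.Icc (low G a) a)

/-- `D` is a `[1,2]`-dominating set of the induced subgraph `G[1,i]`:
`D ⊆ [1,i]` and every vertex of `[1,i]` outside `D` has at least one and at
most two neighbors in `D`. -/
def Dom12 (G : SimpleGraph ℕ) (i : ℕ) (D : Finset ℕ) : Prop :=
  D ⊆ Finset.Icc 1 i ∧
  ∀ v ∈ Finset.Icc 1 i, v ∉ D →
    1 ≤ {u ∈ (D : Set ℕ) | G.Adj v u}.ncard ∧ {u ∈ (D : Set ℕ) | G.Adj v u}.ncard ≤ 2

/-- The minimum (in `ℕ∞`, with `sInf ∅ = ⊤`) of the cardinalities of the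
`[1,2]`-dominating sets `D` of `G[1,i]` satisfying the extra property `P`. -/
noncomputable def gval (G : SimpleGraph ℕ) (i : ℕ) (P : Finset ℕ → Prop) : ℕ∞ :=
  sInf {k : ℕ∞ | ∃ D : Finset ℕ, Dom12 G i D ∧ P D ∧ (D.card : ℕ∞) = k}

/-- `γ_{[1,2]}(i)`. -/
noncomputable def g12 (G : SimpleGraph ℕ) (i : ℕ) : ℕ∞ :=
  gval G i fun _ => True

/-- `γ⁰_{[1,2]}(j,i)`: no vertex of `[j,i]` is in `D`. -/
noncomputable def g0I (G : SimpleGraph ℕ) (j i : ℕ) : ℕ∞ :=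
  gval G i fun D => ∀ x ∈ Finset.Icc j i, x ∉ D

/-- `γ⁰_{[1,2]}(j,i:k)`: `k ∈ D` and no other vertex of `[j,i]` is in `D`. -/
noncomputable def g0Ik (G : SimpleGraph ℕ) (j i k : ℕ) : ℕ∞ :=
  gval G i fun D => k ∈ D ∧ ∀ x ∈ Finset.Icc j i, x ≠ k → x ∉ D

/-- `γ¹_{[1,2]}(i)`: `i ∈ D`. -/
noncomputable def g1 (G : SimpleGraph ℕ) (i : ℕ) : ℕ∞ :=
  gval G i fun D => i ∈ D

/-- `γ¹_{[1,2]}(j,i:i)`: `i ∈ D` and no vertex of `[j,i)` is in `D`. -/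
noncomputable def g1I (G : SimpleGraph ℕ) (j i : ℕ) : ℕ∞ :=
  gval G i fun D => i ∈ D ∧ ∀ x ∈ Finset.Ico j i, x ∉ D

/-- `γ¹_{[1,2]}(k,i:i,j)`: `i, j ∈ D` and no other vertex of `[k,i)` is in `D`. -/
noncomputable def g1Ij (G : SimpleGraph ℕ) (k i j : ℕ) : ℕ∞ :=
  gval G i fun D => i ∈ D ∧ j ∈ D ∧ ∀ x ∈ Finset.Ico k i, x ≠ j → x ∉ D

/-- `γ¹_{[1,2]}(l,i:i,j,k)`: `i, j, k ∈ D` and no other vertex of `[l,i)` is in `D`. -/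
noncomputable def g1Ijk (G : SimpleGraph ℕ) (l i j k : ℕ) : ℕ∞ :=
  gval G i fun D => i ∈ D ∧ j ∈ D ∧ k ∈ D ∧ ∀ x ∈ Finset.Ico l i, x ≠ j → x ≠ k → x ∉ D

/-- `γ¹¹_{[1,2]}(l,i:i,j,k)`: `i, j ∈ D`, all of `[l,k] ⊆ D`, and no vertex of
`(k,i)` other than `j` is in `D`. -/
noncomputable def g11Ijk (G : SimpleGraph ℕ) (l i j k : ℕ) : ℕ∞ :=
  gval G i fun D => i ∈ D ∧ j ∈ D ∧ (∀ x ∈ Finset.Icc l k, x ∈ D) ∧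
    ∀ x ∈ Finset.Ioo k i, x ≠ j → x ∉ D

/-! The vertices `[b, i)` are exactly the neighbours of `i` below it, and all their neighbours
lie beyond `j`. So in a `[1,2]`-dominating set of `G[1,i]` containing `i` and avoiding `[j,i)`,
each of them is dominated by `i` alone, and removing `i` leaves a `[1,2]`-dominating set of
`G[1,b-1]` avoiding `[j,b-1]`: the vertices below `b` do not see `i`. Conversely, adding `i`
to such a set of `G[1,b-1]` dominates `[b,i)` exactly once. -/

open Finset

section Low

variable {G : SimpleGraph ℕ}

lemma low_le_self (a : ℕ) : low G a ≤ a := Nat.sInf_le (Or.inl rfl)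

lemma low_le_of_adj {a u : ℕ} (h : G.Adj a u) : low G a ≤ u := Nat.sInf_le (Or.inr h)

lemma low_eq_or_adj_low (a : ℕ) : low G a = a ∨ G.Adj a (low G a) :=
  Nat.sInf_mem (s := {b | b = a ∨ G.Adj a b}) ⟨a, Or.inl rfl⟩

lemma not_adj_of_lt_low {v a : ℕ} (h : v < low G a) : ¬G.Adj v a :=
  fun hadj => (low_le_of_adj hadj.symm).not_gt h

lemma adj_of_low_le (hG : ∀ a c d, a < c → c < d → G.Adj a d → G.Adj c d) {v a : ℕ}
    (hlow : low G a ≤ v) (hv : v < a) : G.Adj v a := by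
  rcases low_eq_or_adj_low (G := G) a with h | h
  · omega
  rcases hlow.lt_or_eq with hlt | rfl
  · exact hG _ _ _ hlt hv h.symm
  · exact h.symm

lemma lowI_le_low {a c k : ℕ} (hk : k ∈ Set.Icc a c) : lowI G a c ≤ low G k :=
  Nat.sInf_le ⟨k, hk, rfl⟩

lemma lowI_eq_zero_of_lt {a c : ℕ} (h : c < a) : lowI G a c = 0 := by
  rw [lowI, Set.Icc_eq_empty (not_le.mpr h), Set.image_empty, Nat.sInf_empty]

end Low

section Dom12

variable {G : SimpleGraph ℕ}

lemma sep_adj_insert_of_not_adj {v i : ℕ} (D : Finset ℕ) (h : ¬G.Adj v i) :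
    {u ∈ ((insert i D : Finset ℕ) : Set ℕ) | G.Adj v u} = {u ∈ (D : Set ℕ) | G.Adj v u} := by
  ext u
  simp only [coe_insert, Set.mem_ofPred_eq, Set.mem_insert_iff, mem_coe]
  grind

lemma sep_adj_erase_of_not_adj {v i : ℕ} (D : Finset ℕ) (h : ¬G.Adj v i) :
    {u ∈ ((D.erase i : Finset ℕ) : Set ℕ) | G.Adj v u} = {u ∈ (D : Set ℕ) | G.Adj v u} := by
  ext u
  simp only [coe_erase, Set.mem_ofPred_eq, Set.mem_sdiff, mem_coe, Set.mem_singleton_iff]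
  grind

lemma Dom12.erase_of_lt {i m : ℕ} {E : Finset ℕ} (hE : Dom12 G i E) (hmi : m < i)
    (hsub : E.erase i ⊆ Icc 1 m) (hbelow : ∀ v ≤ m, ¬G.Adj v i) :
    Dom12 G m (E.erase i) := by
  refine ⟨hsub, fun v hv hvE => ?_⟩
  obtain ⟨hv1, hvm⟩ := mem_Icc.mp hv
  rw [sep_adj_erase_of_not_adj E (hbelow v hvm)]
  exact hE.2 v (mem_Icc.mpr ⟨hv1, by omega⟩) fun h => hvE (mem_erase.mpr ⟨by omega, h⟩)

lemma Dom12.insert_of_lt {i m : ℕ} {D : Finset ℕ} (hD : Dom12 G m D) (hi : 1 ≤ i) (hmi : m < i)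
    (hbelow : ∀ v ≤ m, ¬G.Adj v i) (habove : ∀ v, m < v → v < i → G.Adj v i)
    (hfar : ∀ v, m < v → v < i → ∀ u ∈ D, ¬G.Adj v u) :
    Dom12 G i (insert i D) := by
  refine ⟨insert_subset (mem_Icc.mpr ⟨hi, le_rfl⟩)
    (hD.1.trans (Icc_subset_Icc_right hmi.le)), fun v hv hvD => ?_⟩
  obtain ⟨hv1, hvle⟩ := mem_Icc.mp hv
  rcases le_or_gt v m with hvm | hmv
  · rw [sep_adj_insert_of_not_adj D (hbelow v hvm)]
    exact hD.2 v (mem_Icc.mpr ⟨hv1, hvm⟩) fun h => hvD (mem_insert_of_mem h)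
  · have hvi : v < i := hvle.lt_of_ne fun h => hvD (h ▸ mem_insert_self i D)
    have hsingle : {u ∈ ((insert i D : Finset ℕ) : Set ℕ) | G.Adj v u} = ({i} : Set ℕ) := by
      ext u
      simp only [coe_insert, Set.mem_ofPred_eq, Set.mem_insert_iff, mem_coe,
        Set.mem_singleton_iff]
      constructor
      · rintro ⟨rfl | hu, hadj⟩
        · rfl
        · exact absurd hadj (hfar v hmv hvi u hu)
      · rintro rfl
        exact ⟨Or.inl rfl, habove v hmv hvi⟩
    rw [hsingle, Set.ncard_singleton]
    omega

lemma forall_lt_of_forall_notMem_Icc {D : Finset ℕ} {j m : ℕ} (hsub : D ⊆ Icc 1 m)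
    (havoid : ∀ y ∈ Icc j m, y ∉ D) : ∀ x ∈ D, x < j := by
  intro x hx
  by_contra! h
  exact havoid x (mem_Icc.mpr ⟨h, (mem_Icc.mp (hsub hx)).2⟩) hx

lemma gval_eq_add_one {i m : ℕ} {P Q : Finset ℕ → Prop}
    (hup : ∀ D, Dom12 G m D → P D → ∃ E, Dom12 G i E ∧ Q E ∧ E.card = D.card + 1)
    (hdown : ∀ E, Dom12 G i E → Q E → ∃ D, Dom12 G m D ∧ P D ∧ D.card + 1 = E.card) :
    gval G i Q = gval G m P + 1 := by
  apply le_antisymm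
  · rcases Set.eq_empty_or_nonempty
      {k : ℕ∞ | ∃ D : Finset ℕ, Dom12 G m D ∧ P D ∧ (D.card : ℕ∞) = k} with h | h
    · simp [gval, h]
    · obtain ⟨D, hD, hPD, hcard⟩ := csInf_mem h
      obtain ⟨E, hE, hQE, hEcard⟩ := hup D hD hPD
      calc gval G i Q ≤ E.card := sInf_le ⟨E, hE, hQE, rfl⟩
        _ = gval G m P + 1 := by rw [gval, ← hcard, hEcard]; push_cast; rfl
  · refine le_sInf ?_
    rintro _ ⟨E, hE, hQE, rfl⟩
    obtain ⟨D, hD, hPD, hDcard⟩ := hdown E hE hQE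
    calc gval G m P + 1 ≤ (D.card : ℕ∞) + 1 := by
          gcongr; exact sInf_le ⟨D, hD, hPD, rfl⟩
      _ = E.card := by rw [← hDcard]; push_cast; rfl

end Dom12

theorem g1I_eq_g0I_add_one_general (G : SimpleGraph ℕ) (n : ℕ)
    (hG : GoodNumbering G n) (i j b : ℕ)
    (hbdef : b = low G i) (hj : j ∈ Finset.Ico 1 i)
    (h2 : j < lowI G b (i - 1)) :
    g1I G j i = g0I G j (b - 1) + 1 := by
  obtain ⟨hj1, hji⟩ := mem_Ico.mp hj
  have hbi : b < i := by
    by_contra! h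
    rw [lowI_eq_zero_of_lt (by omega)] at h2
    omega
  have hjb : j < b := h2.trans_le ((lowI_le_low ⟨le_rfl, by omega⟩).trans (low_le_self b))
  have hfar : ∀ v ∈ Set.Icc b (i - 1), ∀ u, G.Adj v u → j < u := fun v hv u h =>
    h2.trans_le ((lowI_le_low hv).trans (low_le_of_adj h))
  have hbelow : ∀ v ≤ b - 1, ¬G.Adj v i := fun v hv => not_adj_of_lt_low (by omega)
  have habove : ∀ v, b - 1 < v → v < i → G.Adj v i := fun v hbv hvi =>
    adj_of_low_le hG.2 (by omega) hvi
  apply gval_eq_add_one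
  · intro D hD hPD
    have hlt := forall_lt_of_forall_notMem_Icc hD.1 hPD
    refine ⟨insert i D, hD.insert_of_lt (by omega) (by omega) hbelow habove ?_,
      ⟨mem_insert_self i D, ?_⟩, card_insert_of_notMem fun h => by have := hlt i h; omega⟩
    · exact fun v hbv hvi u hu hadj => (hfar v ⟨by omega, by omega⟩ u hadj).not_gt (hlt u hu)
    · intro x hx hxD
      rcases mem_insert.mp hxD with rfl | h
      · exact (mem_Ico.mp hx).2.false
      · exact (mem_Ico.mp hx).1.not_gt (hlt x h)
  · rintro E hE ⟨hiE, hQE⟩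
    have hlt : ∀ x ∈ E.erase i, x < j := fun x hx => by
      obtain ⟨hxi, hxE⟩ := mem_erase.mp hx
      have := (mem_Icc.mp (hE.1 hxE)).2
      by_contra! h
      exact hQE x (mem_Ico.mpr ⟨h, by omega⟩) hxE
    refine ⟨E.erase i, hE.erase_of_lt (by omega) ?_ hbelow, ?_, card_erase_add_one hiE⟩
    · exact fun x hx => mem_Icc.mpr ⟨(mem_Icc.mp (hE.1 (mem_of_mem_erase hx))).1, by
        have := hlt x hx; omega⟩
    · exact fun x hx hxE => (mem_Icc.mp hx).1.not_gt (hlt x hxE)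

/-- Lemma (ii): with `b = low(i) > 1`, if `low(b-1) < j < low(b, i-1)` then
`γ¹_{[1,2]}(j,i:i) = γ⁰_{[1,2]}(j, b-1) + 1`. -/
theorem g1I_eq_g0I_add_one (G : SimpleGraph ℕ) (n : ℕ) (hn : 1 ≤ n)
    (hG : GoodNumbering G n) (i j b : ℕ) (hi : i ∈ Finset.Icc 1 n)
    (hbdef : b = low G i) (hb : 1 < b) (hj : j ∈ Finset.Ico 1 i)
    (h1 : low G (b - 1) < j) (h2 : j < lowI G b (i - 1)) :
    g1I G j i = g0I G j (b - 1) + 1 :=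
  g1I_eq_g0I_add_one_general G n hG i j b hbdef hj h2
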